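/- For the Domany–Kinzel local operator Q_DK^{(l)}(p,q), the hypothesis of the explicit-spectrum theorem, namely a10^10 − a10^00 = a11^11 − a11^01, holds if and only if p − 0 = q − p, i.e., q = 2p; and in that case the multiset of eigenvalues of Q_N^{(g)} is {p^k with multiplicity 2·C(N−1,k) : 0 ≤ k ≤ N−1}. -/

import Mathlib

open Matrix Kronecker

/-- Configuration space of `N` sites, each holding a state in `{0,1}`. -/
abbrev Conf (N : ℕ) := Fin N → Fin 2

/-- `Fin 2 × Conf N ≃ Conf (N+1)` by prepending the first bit. -/
def confEquiv (N : ℕ) : Fin 2 × Conf N ≃ Conf (N + 1) :=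
  Fin.consEquiv (fun _ => Fin 2)

/-- `(Fin 2 × Fin 2) × Conf N ≃ Conf (N+2)` by prepending the first two bits. -/
def confEquiv2 (N : ℕ) : (Fin 2 × Fin 2) × Conf N ≃ Conf (N + 2) :=
  (((Equiv.prodAssoc (Fin 2) (Fin 2) (Conf N)).trans
    ((Equiv.refl (Fin 2)).prodCongr (confEquiv N))).trans (confEquiv (N + 1)))

/-- The global operator `Q_N^{(g)}`, defined by `Q_1 = I_2` and
`Q_{N+1} = (I_2 ⊗ Q_N) (Q^{(l)} ⊗ I_{2^{N-1}})`. -/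
def Qg {R : Type*} [CommRing R] (Ql : Matrix (Fin 2 × Fin 2) (Fin 2 × Fin 2) R) :
    (N : ℕ) → Matrix (Conf N) (Conf N) R
  | 0 => 1
  | 1 => 1
  | (N + 2) =>
      (Matrix.reindex (confEquiv (N + 1)) (confEquiv (N + 1))
          ((1 : Matrix (Fin 2) (Fin 2) R) ⊗ₖ Qg Ql (N + 1))) *
      (Matrix.reindex (confEquiv2 N) (confEquiv2 N)
          (Ql ⊗ₖ (1 : Matrix (Conf N) (Conf N) R)))

/-- Top-left block `E`. -/
def blockTL {R : Type*} [CommRing R] {N : ℕ}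
    (M : Matrix (Conf (N + 1)) (Conf (N + 1)) R) : Matrix (Conf N) (Conf N) R :=
  Matrix.of fun x y => M (Fin.cons 0 x) (Fin.cons 0 y)

/-- Top-right block `F`. -/
def blockTR {R : Type*} [CommRing R] {N : ℕ}
    (M : Matrix (Conf (N + 1)) (Conf (N + 1)) R) : Matrix (Conf N) (Conf N) R :=
  Matrix.of fun x y => M (Fin.cons 0 x) (Fin.cons 1 y)

/-- Bottom-left block `G`. -/
def blockBL {R : Type*} [CommRing R] {N : ℕ}
    (M : Matrix (Conf (N + 1)) (Conf (N + 1)) R) : Matrix (Conf N) (Conf N) R :=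
  Matrix.of fun x y => M (Fin.cons 1 x) (Fin.cons 0 y)

/-- Bottom-right block `H`. -/
def blockBR {R : Type*} [CommRing R] {N : ℕ}
    (M : Matrix (Conf (N + 1)) (Conf (N + 1)) R) : Matrix (Conf N) (Conf N) R :=
  Matrix.of fun x y => M (Fin.cons 1 x) (Fin.cons 1 y)


/-- The Domany–Kinzel local operator, rows indexed by output pair `(k,l)`, columns by input
pair `(i,j)`: `a₀₀⁰⁰ = 1`, `a₀₀¹⁰ = 1−p`, `a₀₁⁰¹ = 1−p`, `a₀₁¹¹ = 1−q`, `a₁₀¹⁰ = p`,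
`a₁₁⁰¹ = p`, `a₁₁¹¹ = q`, all other entries `0`. -/
noncomputable def QdkL (p q : ℂ) : Matrix (Fin 2 × Fin 2) (Fin 2 × Fin 2) ℂ :=
  Matrix.single (0, 0) (0, 0) 1 +
  Matrix.single (0, 0) (1, 0) (1 - p) +
  Matrix.single (0, 1) (0, 1) (1 - p) +
  Matrix.single (0, 1) (1, 1) (1 - q) +
  Matrix.single (1, 0) (1, 0) p +
  Matrix.single (1, 1) (0, 1) p +
  Matrix.single (1, 1) (1, 1) q

lemma confEquiv_apply (N : ℕ) (a : Fin 2) (x : Conf N) :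
    confEquiv N (a, x) = Fin.cons a x := rfl

lemma confEquiv_symm_apply (N : ℕ) (f : Conf (N+1)) :
    (confEquiv N).symm f = (f 0, Fin.tail f) := rfl

lemma confEquiv2_apply (N : ℕ) (a c : Fin 2) (x : Conf N) :
    confEquiv2 N ((a, c), x) = Fin.cons a (Fin.cons c x) := rfl

lemma confEquiv2_symm_apply (N : ℕ) (f : Conf (N+2)) :
    (confEquiv2 N).symm f = ((f 0, f 1), Fin.tail (Fin.tail f)) := by
  rw [Equiv.symm_apply_eq, confEquiv2_apply]
  have h1 : Fin.cons (f 1) (Fin.tail (Fin.tail f)) = Fin.tail f := by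
    conv_rhs => rw [← Fin.cons_self_tail (Fin.tail f)]
    congr 1
  rw [h1, Fin.cons_self_tail]

lemma Qg_succ_apply {R : Type*} [CommRing R] (L : Matrix (Fin 2 × Fin 2) (Fin 2 × Fin 2) R)
    (N : ℕ) (a b : Fin 2) (u w : Conf (N+1)) :
    Qg L (N+2) (Fin.cons a u) (Fin.cons b w) =
      ∑ c : Fin 2, L (a, c) (b, w 0) * Qg L (N+1) u (Fin.cons c (Fin.tail w)) := by
  simp only [Qg]
  rw [Matrix.mul_apply]
  rw [← Equiv.sum_comp (confEquiv2 N)]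
  rw [Fintype.sum_prod_type, Fintype.sum_prod_type]
  simp only [Matrix.reindex_apply, Matrix.submatrix_apply, confEquiv2_apply,
    Equiv.symm_apply_apply, confEquiv_symm_apply, Matrix.kroneckerMap_apply,
    Fin.cons_zero, Fin.tail_cons, Matrix.one_apply, confEquiv2_symm_apply, Fin.cons_one]
  simp only [mul_ite, ite_mul, mul_zero, zero_mul, mul_one, one_mul,
    Finset.sum_ite_eq, Finset.sum_ite_eq', Finset.mem_univ, if_true]
  rw [Finset.sum_comm]
  simp only [Finset.sum_ite_eq, Finset.mem_univ, if_true]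
  exact Finset.sum_congr rfl fun c _ => mul_comm _ _

def splitEquiv (N : ℕ) : Conf N ⊕ Conf N ≃ Conf (N + 1) where
  toFun x := Sum.elim (fun y : Conf N => Fin.cons 0 y) (fun y : Conf N => Fin.cons 1 y) x
  invFun f := if f 0 = 0 then Sum.inl (Fin.tail f) else Sum.inr (Fin.tail f)
  left_inv x := by
    rcases x with x | x <;> simp [Fin.tail_cons]
  right_inv f := by
    by_cases h : f 0 = 0
    · simp only [h, if_true, Sum.elim_inl]
      rw [← h, Fin.cons_self_tail]
    · have h1 : f 0 = 1 := by omega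
      simp only [h, if_false, Sum.elim_inr]
      rw [← h1, Fin.cons_self_tail]

@[simp] lemma splitEquiv_inl (N : ℕ) (x : Conf N) :
    splitEquiv N (Sum.inl x) = Fin.cons 0 x := rfl
@[simp] lemma splitEquiv_inr (N : ℕ) (x : Conf N) :
    splitEquiv N (Sum.inr x) = Fin.cons 1 x := rfl

/-- mask matrix C -/
noncomputable def maskC (p : ℂ) (N : ℕ) : Matrix (Conf (N+1)) (Conf (N+1)) ℂ :=
  Matrix.of fun u w => if w 0 = 1 then p * Qg (QdkL p (2*p)) (N+1) u w else 0

lemma fin2cases (x : Fin 2) : x = 0 ∨ x = 1 := by omega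

lemma blocks_eq (p : ℂ) (N : ℕ) :
    Matrix.reindex (splitEquiv (N+1)).symm (splitEquiv (N+1)).symm (Qg (QdkL p (2*p)) (N+2)) =
      Matrix.fromBlocks
        (Qg (QdkL p (2*p)) (N+1) - maskC p N)
        ((1-p) • Qg (QdkL p (2*p)) (N+1) - maskC p N)
        (maskC p N)
        (p • Qg (QdkL p (2*p)) (N+1) + maskC p N) := by
  ext i j
  rcases i with u | u <;> rcases j with w | w <;>
  · simp only [Matrix.reindex_apply, Matrix.submatrix_apply, Equiv.symm_symm,
      splitEquiv_inl, splitEquiv_inr,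
      Matrix.fromBlocks_apply₁₁, Matrix.fromBlocks_apply₁₂,
      Matrix.fromBlocks_apply₂₁, Matrix.fromBlocks_apply₂₂,
      maskC, Matrix.sub_apply, Matrix.add_apply,
      Matrix.smul_apply, Matrix.of_apply, smul_eq_mul]
    rw [Qg_succ_apply, Fin.sum_univ_two]
    rcases fin2cases (w 0) with h | h <;>
    · have hw : Fin.cons (w 0) (Fin.tail w) = w := Fin.cons_self_tail w
      rw [h] at hw
      rw [h]
      simp only [QdkL, Matrix.single, Matrix.add_apply, Matrix.of_apply,
        Prod.ext_iff, Fin.ext_iff]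
      norm_num [hw]
      try ring

lemma det_step (p z : ℂ) (N : ℕ) :
    (z • (1 : Matrix (Conf (N+2)) (Conf (N+2)) ℂ) - Qg (QdkL p (2*p)) (N+2)).det =
      (z • (1 : Matrix (Conf (N+1)) (Conf (N+1)) ℂ) - p • Qg (QdkL p (2*p)) (N+1)).det *
      (z • (1 : Matrix (Conf (N+1)) (Conf (N+1)) ℂ) - Qg (QdkL p (2*p)) (N+1)).det := by
  set Q := Qg (QdkL p (2*p)) (N+1) with hQ
  set C := maskC p N with hC
  set e := splitEquiv (N+1) with he
  rw [← Matrix.det_reindex_self e.symm]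
  have h1 : Matrix.reindex e.symm e.symm
      (z • (1 : Matrix (Conf (N+2)) (Conf (N+2)) ℂ) - Qg (QdkL p (2*p)) (N+2)) =
      Matrix.fromBlocks (z • 1 - (Q - C)) (-((1-p) • Q - C)) (-C) (z • 1 - (p • Q + C)) := by
    have hsub : ∀ (A B : Matrix (Conf (N+2)) (Conf (N+2)) ℂ),
        Matrix.reindex e.symm e.symm (z • A - B) =
          z • Matrix.reindex e.symm e.symm A - Matrix.reindex e.symm e.symm B := by
      intro A B; ext i j
      simp [Matrix.reindex_apply, Matrix.sub_apply, Matrix.smul_apply]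
    have hone : Matrix.reindex e.symm e.symm (1 : Matrix (Conf (N+2)) (Conf (N+2)) ℂ) = 1 := by
      rw [Matrix.reindex_apply]; exact Matrix.submatrix_one_equiv e.symm.symm
    rw [hsub, hone, blocks_eq]
    rw [← Matrix.fromBlocks_one, Matrix.fromBlocks_smul]
    have hfb : ∀ (A B Cc D A' B' C' D' : Matrix (Conf (N+1)) (Conf (N+1)) ℂ),
        Matrix.fromBlocks A B Cc D - Matrix.fromBlocks A' B' C' D' =
          Matrix.fromBlocks (A-A') (B-B') (Cc-C') (D-D') := by
      intros A B Cc D A' B' C' D'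
      ext i j
      rcases i with i | i <;> rcases j with j | j <;> simp
    rw [hfb]
    simp only [smul_zero, zero_sub]
    rfl
  rw [h1]
  have h2 : Matrix.fromBlocks (z • 1 - (Q - C)) (-((1-p) • Q - C)) (-C) (z • 1 - (p • Q + C)) =
      Matrix.fromBlocks 1 0 (-1) 1 *
        Matrix.fromBlocks (z • 1 - p • Q) (-((1-p) • Q - C)) 0 (z • 1 - Q) *
        Matrix.fromBlocks 1 0 1 1 := by
    rw [Matrix.fromBlocks_multiply, Matrix.fromBlocks_multiply]
    simp only [Matrix.one_mul, Matrix.mul_one, Matrix.zero_mul, Matrix.mul_zero,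
      add_zero, zero_add, Matrix.neg_mul, Matrix.one_mul]
    rw [Matrix.fromBlocks_inj]
    refine ⟨by module, by module, by module, by module⟩
  rw [h2, Matrix.det_mul, Matrix.det_mul, Matrix.det_fromBlocks_zero₂₁,
    Matrix.det_fromBlocks_zero₁₂, Matrix.det_fromBlocks_zero₁₂, Matrix.det_one]
  ring

lemma comb (a : ℕ → ℂ) (N : ℕ) :
    ∏ k ∈ Finset.range (N+2), a k ^ (2*Nat.choose (N+1) k) =
    (∏ k ∈ Finset.range (N+1), a k ^ (2*Nat.choose N k)) *
    ∏ k ∈ Finset.range (N+1), a (k+1) ^ (2*Nat.choose N k) := by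
  rw [Finset.prod_range_succ' (fun k => a k ^ (2*Nat.choose (N+1) k)) (N+1)]
  simp only [Nat.choose_succ_succ, Nat.mul_add, pow_add]
  rw [Finset.prod_mul_distrib]
  rw [Finset.prod_range_succ' (fun k => a k ^ (2*Nat.choose N k)) N]
  rw [Finset.prod_range_succ (fun k => a (k+1) ^ (2*Nat.choose N (k+1))) N]
  simp only [Nat.choose_succ_self, Nat.mul_zero, pow_zero, mul_one, Nat.choose_zero_right,
    Nat.choose_self]
  ring

lemma spec (p : ℂ) : ∀ N, ∀ z : ℂ,
    (z • (1 : Matrix (Conf (N+1)) (Conf (N+1)) ℂ) - Qg (QdkL p (2*p)) (N+1)).det =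
      ∏ k ∈ Finset.range (N+1), (z - p ^ k) ^ (2 * Nat.choose N k) := by
  intro N
  induction N with
  | zero =>
    intro z
    have h1 : z • (1 : Matrix (Conf 1) (Conf 1) ℂ) - Qg (QdkL p (2*p)) 1 =
        (z - 1) • 1 := by
      rw [show Qg (QdkL p (2*p)) 1 = 1 from rfl, sub_smul, one_smul]
    rw [h1, Matrix.det_smul, Matrix.det_one]
    have hcard : Fintype.card (Conf 1) = 2 := by simp
    rw [hcard]
    simp
  | succ N IH =>
    intro z
    have hsum : ∑ k ∈ Finset.range (N+1), 2 * Nat.choose N k = 2^(N+1) := by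
      rw [← Finset.mul_sum, Nat.sum_range_choose]
      ring
    have card2 : Fintype.card (Conf (N+1)) = 2^(N+1) := by simp
    show (z • (1 : Matrix (Conf (N+2)) (Conf (N+2)) ℂ) - Qg (QdkL p (2*p)) (N+2)).det =
      ∏ k ∈ Finset.range (N+2), (z - p ^ k) ^ (2 * Nat.choose (N+1) k)
    rw [det_step]
    have hpQ : (z • (1 : Matrix (Conf (N+1)) (Conf (N+1)) ℂ) -
        p • Qg (QdkL p (2*p)) (N+1)).det =
        ∏ k ∈ Finset.range (N+1), (z - p^(k+1))^(2*Nat.choose N k) := by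
      by_cases hp : p = 0
      · rw [hp, zero_smul, sub_zero, Matrix.det_smul, Matrix.det_one, card2, mul_one]
        have : ∀ k ∈ Finset.range (N+1), (z - (0:ℂ)^(k+1))^(2*Nat.choose N k)
            = z^(2*Nat.choose N k) := by
          intro k _
          rw [zero_pow (Nat.succ_ne_zero k), sub_zero]
        rw [Finset.prod_congr rfl this, Finset.prod_pow_eq_pow_sum, hsum]
      · have h1 : z • (1 : Matrix (Conf (N+1)) (Conf (N+1)) ℂ) -
            p • Qg (QdkL p (2*p)) (N+1) =
            p • ((z/p) • (1 : Matrix (Conf (N+1)) (Conf (N+1)) ℂ) -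
              Qg (QdkL p (2*p)) (N+1)) := by
          rw [smul_sub, smul_smul, mul_div_cancel₀ _ hp]
        rw [h1, Matrix.det_smul, card2, IH (z/p)]
        rw [show (p:ℂ)^(2^(N+1)) = ∏ k ∈ Finset.range (N+1), p^(2*Nat.choose N k) from by
          rw [Finset.prod_pow_eq_pow_sum, hsum]]
        rw [← Finset.prod_mul_distrib]
        apply Finset.prod_congr rfl
        intro k _
        rw [← mul_pow]
        congr 1
        field_simp
        ring
    rw [hpQ, IH z, comb (fun k => z - p^k) N]
    exact mul_comm _ _


/-- for the DK local operator, the hypothesis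
`a₁₀¹⁰ − a₁₀⁰⁰ = a₁₁¹¹ − a₁₁⁰¹` holds iff `q = 2p`, and in that case the multiset of
eigenvalues of `Q_N^{(g)}` is `{[p^k]^{2·C(N-1,k)} : 0 ≤ k ≤ N−1}` (stated via the
characteristic polynomial). -/
theorem stmt15 (p q : ℝ) :
    ((QdkL p q (1, 0) (1, 0) - QdkL p q (1, 0) (0, 0) =
        QdkL p q (1, 1) (1, 1) - QdkL p q (1, 1) (0, 1)) ↔ q = 2 * p) ∧
    (q = 2 * p → ∀ (N : ℕ) (z : ℂ),
      (z • (1 : Matrix (Conf (N + 1)) (Conf (N + 1)) ℂ) - Qg (QdkL p q) (N + 1)).det =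
        ∏ k ∈ Finset.range (N + 1), (z - (p : ℂ) ^ k) ^ (2 * Nat.choose N k)) := by
  constructor
  · have e1 : QdkL p q (1,0) (1,0) = (p:ℂ) := by
      simp [QdkL, Matrix.single, Matrix.add_apply, Prod.ext_iff, Fin.ext_iff]
    have e2 : QdkL p q (1,0) (0,0) = 0 := by
      simp [QdkL, Matrix.single, Matrix.add_apply, Prod.ext_iff, Fin.ext_iff]
    have e3 : QdkL p q (1,1) (1,1) = (q:ℂ) := by
      simp [QdkL, Matrix.single, Matrix.add_apply, Prod.ext_iff, Fin.ext_iff]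
    have e4 : QdkL p q (1,1) (0,1) = (p:ℂ) := by
      simp [QdkL, Matrix.single, Matrix.add_apply, Prod.ext_iff, Fin.ext_iff]
    rw [e1, e2, e3, e4]
    constructor
    · intro h
      have : (q:ℂ) = 2*(p:ℂ) := by linear_combination -h
      exact_mod_cast this
    · intro h
      push_cast [h]
      ring
  · intro hq N z
    have hq' : (q:ℂ) = 2 * (p:ℂ) := by push_cast [hq]; ring
    rw [hq']
    exact spec p N z
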